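/- arXiv:2604.28096 — 3 statements merged into one kernel-verified Lean document; each statement's English description precedes it below -/
import Mathlib

section
/- Let G be the complete graph on 2k vertices minus a perfect matching {u_i, v_i}, i ∈ [k], with k = 2^t. Then G admits a composition-minimal clique cover with exactly 2 + 2t cliques, namely U = {u_1,...,u_k}, V = {v_1,...,v_k}, and for each bit position p ∈ [t] the cliques A_p = {u_i : bit p of i is 0} ∪ {v_i : bit p of i is 1} and B_p = {u_i : bit p of i is 1} ∪ {v_i : bit p of i is 0}. -/
/-- The complete graph on vertices `u_1,…,u_k, v_1,…,v_k` minus the perfect matching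
`{u_i, v_i}`: vertex `(b, i)` is `u_i` when `b = false` and `v_i` when `b = true`,
and two vertices are adjacent iff their indices differ. -/
def matchMinusGraph (k : ℕ) : SimpleGraph (Bool × Fin k) where
  Adj x y := x.2 ≠ y.2
  symm := ⟨fun _ _ h => Ne.symm h⟩
  loopless := ⟨fun _ h => h rfl⟩

/-- `𝒞` is a clique cover of `G`. -/
def IsCliqueCover {V : Type*} (G : SimpleGraph V) (𝒞 : Finset (Finset V)) : Prop :=
  (∀ C ∈ 𝒞, G.IsClique (C : Set V)) ∧
  ∀ u v : V, G.Adj u v → ∃ C ∈ 𝒞, u ∈ C ∧ v ∈ C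

/-- `𝒞` is composition-minimal: every pair of distinct cliques of `𝒞` admits a
witnessing non-edge between them. -/
def CompositionMinimal {V : Type*} (G : SimpleGraph V) (𝒞 : Finset (Finset V)) : Prop :=
  ∀ C ∈ 𝒞, ∀ D ∈ 𝒞, C ≠ D →
    ∃ u ∈ C, ∃ v ∈ D, u ≠ v ∧ ¬ G.Adj u v

/-!
Every clique of the family is a transversal `{(f i, i)}` of the removed matching, for some
`f : Fin k → Bool`, and all of these are cliques. Two different transversals differ at some
index `i`, so one contains `u_i` and the other `v_i`: this non-edge makes the family
composition-minimal. An edge `(b, i) (c, j)` with `i ≠ j` lies in a constant transversal when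
`b = c`, and otherwise in the one given by a bit `p < t` at which `i` and `j` differ, or by its
negation. The `2 + 2t` functions are told apart by their values at `0` and at the powers `2^p`.
-/

theorem Nat.exists_lt_testBit_ne_of_lt_two_pow {t x y : ℕ} (hx : x < 2 ^ t) (hy : y < 2 ^ t)
    (hxy : x ≠ y) : ∃ p < t, x.testBit p ≠ y.testBit p := by
  obtain ⟨p, hp⟩ := Nat.exists_testBit_ne_of_ne hxy
  refine ⟨p, lt_of_not_ge fun htp => hp ?_, hp⟩
  have h2 : 2 ^ t ≤ 2 ^ p := Nat.pow_le_pow_right two_pos htp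
  rw [Nat.testBit_lt_two_pow (hx.trans_le h2), Nat.testBit_lt_two_pow (hy.trans_le h2)]

namespace matchMinusGraph

variable {k : ℕ}

/-- The set `{u_i : f i = false} ∪ {v_i : f i = true}`, taking one endpoint of each non-edge. -/
def transversal (f : Fin k → Bool) : Finset (Bool × Fin k) :=
  Finset.univ.image fun i => (f i, i)

@[simp]
theorem mk_mem_transversal {f : Fin k → Bool} {b : Bool} {i : Fin k} :
    (b, i) ∈ transversal f ↔ f i = b := by
  simp [transversal]

theorem transversal_injective : Function.Injective (transversal (k := k)) := by
  intro f g h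
  funext i
  rw [← mk_mem_transversal, h, mk_mem_transversal]

theorem isClique_transversal (f : Fin k → Bool) :
    (matchMinusGraph k).IsClique (transversal f : Set (Bool × Fin k)) := by
  rintro ⟨b, i⟩ hb ⟨c, j⟩ hc hne (rfl : i = j)
  rw [Finset.mem_coe, mk_mem_transversal] at hb hc
  exact hne (by rw [← hb, ← hc])

theorem isCliqueCover_image_transversal {s : Finset (Fin k → Bool)}
    (hs : ∀ i j, i ≠ j → ∀ b c, ∃ f ∈ s, f i = b ∧ f j = c) :
    IsCliqueCover (matchMinusGraph k) (s.image transversal) := by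
  refine ⟨?_, ?_⟩
  · simp only [Finset.mem_image]
    rintro _ ⟨f, -, rfl⟩
    exact isClique_transversal f
  · rintro ⟨b, i⟩ ⟨c, j⟩ hij
    obtain ⟨f, hf, hi, hj⟩ := hs i j hij b c
    exact ⟨transversal f, Finset.mem_image_of_mem _ hf, mk_mem_transversal.mpr hi,
      mk_mem_transversal.mpr hj⟩

theorem compositionMinimal_image_transversal (s : Finset (Fin k → Bool)) :
    CompositionMinimal (matchMinusGraph k) (s.image transversal) := by
  simp only [CompositionMinimal, Finset.mem_image]
  rintro _ ⟨f, -, rfl⟩ _ ⟨g, -, rfl⟩ hfg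
  obtain ⟨i, hi⟩ := Function.ne_iff.mp (mt (congrArg transversal) hfg)
  exact ⟨(f i, i), mk_mem_transversal.mpr rfl, (g i, i), mk_mem_transversal.mpr rfl,
    fun h => hi (congrArg Prod.fst h), fun h => h rfl⟩

end matchMinusGraph

/-- `(none, false)`, `(none, true)`, `(some p, false)`, `(some p, true)` select the cliques
`U`, `V`, `A_p`, `B_p` as transversals. -/
def bitSelector {t : ℕ} : Option (Fin t) × Bool → Fin (2 ^ t) → Bool
  | (none, c), _ => c
  | (some p, false), i => (i : ℕ).testBit p
  | (some p, true), i => !(i : ℕ).testBit p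

theorem bitSelector_some {t : ℕ} (p : Fin t) (c : Bool) (i : Fin (2 ^ t)) :
    bitSelector (some p, c) i = (c ^^ (i : ℕ).testBit p) := by
  cases c <;> simp [bitSelector]

theorem bitSelector_zero {t : ℕ} (x : Option (Fin t) × Bool) :
    bitSelector x ⟨0, Nat.two_pow_pos t⟩ = x.2 := by
  obtain ⟨_ | p, c⟩ := x
  · rfl
  · simp [bitSelector_some]

theorem bitSelector_two_pow {t : ℕ} (x : Option (Fin t) × Bool) (p : Fin t) :
    bitSelector x ⟨2 ^ (p : ℕ), Nat.pow_lt_pow_right one_lt_two p.isLt⟩ =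
      (x.2 ^^ decide (x.1 = some p)) := by
  obtain ⟨_ | q, c⟩ := x
  · simp [bitSelector]
  · simp [bitSelector_some, Nat.testBit_two_pow, Fin.val_inj, eq_comm]

theorem bitSelector_injective {t : ℕ} : Function.Injective (bitSelector (t := t)) := by
  intro x y h
  have h2 : x.2 = y.2 := by rw [← bitSelector_zero x, ← bitSelector_zero y, h]
  refine Prod.ext (Option.ext fun p => ?_) h2
  have hp := bitSelector_two_pow x p
  rw [h, bitSelector_two_pow, h2, Bool.xor_right_inj, decide_eq_decide] at hp
  exact hp.symm

theorem exists_bitSelector_eq {t : ℕ} {i j : Fin (2 ^ t)} (hij : i ≠ j) (b c : Bool) :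
    ∃ x, bitSelector x i = b ∧ bitSelector x j = c := by
  by_cases hbc : b = c
  · exact ⟨(none, b), rfl, hbc⟩
  obtain ⟨p, hp, hbit⟩ :=
    Nat.exists_lt_testBit_ne_of_lt_two_pow i.isLt j.isLt (Fin.val_ne_of_ne hij)
  refine ⟨(some ⟨p, hp⟩, b ^^ (i : ℕ).testBit p), ?_, ?_⟩
  · simp [bitSelector_some]
  · rw [bitSelector_some, Bool.eq_not_iff.mpr (Ne.symm hbit), Bool.xor_assoc, Bool.xor_not_self,
      Bool.xor_true, Bool.eq_not_iff.mpr (Ne.symm hbc)]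

/-- For `k = 2^t`, the graph `K_{2k}` minus a perfect matching admits a
composition-minimal clique cover with exactly `2 + 2t` cliques, namely
`U = {u_i}`, `V = {v_i}`, and for each bit position `p < t` the cliques
`A_p = {u_i : bit p of i = 0} ∪ {v_i : bit p of i = 1}` and
`B_p = {u_i : bit p of i = 1} ∪ {v_i : bit p of i = 0}`. -/
theorem logarithmic_compositionMinimal_cover (t : ℕ) :
    let k := 2 ^ t
    let G := matchMinusGraph k
    let U : Finset (Bool × Fin k) := Finset.univ.image (fun i : Fin k => (false, i))
    let W : Finset (Bool × Fin k) := Finset.univ.image (fun i : Fin k => (true, i))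
    let A : ℕ → Finset (Bool × Fin k) :=
      fun p => Finset.univ.image (fun i : Fin k => ((i : ℕ).testBit p, i))
    let B : ℕ → Finset (Bool × Fin k) :=
      fun p => Finset.univ.image (fun i : Fin k => (!(i : ℕ).testBit p, i))
    let 𝒞 : Finset (Finset (Bool × Fin k)) :=
      insert U (insert W ((Finset.range t).image A ∪ (Finset.range t).image B))
    IsCliqueCover G 𝒞 ∧ CompositionMinimal G 𝒞 ∧ 𝒞.card = 2 + 2 * t := by
  intro k G U W A B 𝒞
  have h𝒞 : 𝒞 = (Finset.univ.image bitSelector).image matchMinusGraph.transversal := by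
    ext C
    rw [Finset.image_image]
    simp only [𝒞, Finset.mem_insert, Finset.mem_union, Finset.mem_image, Finset.mem_range,
      Finset.mem_univ, true_and, Function.comp_apply, Prod.exists, Option.exists,
      Bool.exists_bool, Fin.exists_iff]
    change _ ↔ (U = C ∨ W = C) ∨ ∃ p, ∃ _ : p < t, A p = C ∨ B p = C
    simp only [exists_prop, and_or_left, exists_or, or_assoc, @eq_comm _ C]
  rw [h𝒞]
  refine ⟨matchMinusGraph.isCliqueCover_image_transversal ?_,
    matchMinusGraph.compositionMinimal_image_transversal _, ?_⟩
  · intro i j hij b c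
    obtain ⟨x, hx⟩ := exists_bitSelector_eq hij b c
    exact ⟨bitSelector x, Finset.mem_image_of_mem _ (Finset.mem_univ x), hx⟩
  · rw [Finset.card_image_of_injective _ matchMinusGraph.transversal_injective,
      Finset.card_image_of_injective _ bitSelector_injective, Finset.card_univ,
      Fintype.card_prod, Fintype.card_option, Fintype.card_fin, Fintype.card_bool]
    ring
end

section
/- Let G be a graph with σ − 1 non-edges. In any first-fit greedy coloring of the complement of G with color classes F_1, ..., F_p, the number q of color classes of size at least 2 satisfies q(q−1) ≤ σ − 1; in particular q = O(√σ). -/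
/-!
In a first-fit colouring of a graph `H`, a vertex of colour `k` has an earlier `H`-neighbour in
each of the colours `0, …, k - 1`; charging every edge of `H` to its later endpoint shows that the
colour sum `∑ v, c v` is at most the number of edges of `H = Gᶜ`, i.e. `σ - 1`. On the other hand
the `q` classes of size at least two carry distinct colours, so they alone contribute at least
`2 (0 + 1 + ⋯ + (q - 1)) = q (q - 1)` to the colour sum.
-/

open Finset

theorem Finset.choose_two_card_le_sum (S : Finset ℕ) : (#S).choose 2 ≤ ∑ k ∈ S, k := by
  induction S using Finset.induction_on_max with
  | empty => simp
  | insert a s lt_a ih =>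
    have a_notMem : a ∉ s := fun ha => (lt_a a ha).false
    have card_le : #s ≤ a := by
      simpa using card_le_card fun x hx => mem_range.2 (lt_a x hx)
    have choose_succ : (#s + 1).choose 2 = (#s).choose 2 + #s := by
      rw [Nat.choose_succ_succ', Nat.choose_one_right, Nat.add_comm]
    rw [card_insert_of_notMem a_notMem, choose_succ, sum_insert a_notMem]
    omega

theorem Finset.sum_mul_card_fiber_le {V : Type*} [Fintype V] (c : V → ℕ) (S : Finset ℕ) :
    ∑ k ∈ S, k * #{v | c v = k} ≤ ∑ v, c v :=
  calc ∑ k ∈ S, k * #{v | c v = k}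
      = ∑ v with c v ∈ S, c v := by
        simpa [mul_comm] using sum_fiberwise_eq_sum_filter' univ S c fun k => k
    _ ≤ ∑ v, c v := sum_le_sum_of_subset (filter_subset _ _)

theorem Finset.card_mul_pred_le_sum_of_two_le_card_fiber {V : Type*} [Fintype V] (c : V → ℕ)
    (S : Finset ℕ) (hS : ∀ k ∈ S, 2 ≤ #{v | c v = k}) :
    #S * (#S - 1) ≤ ∑ v, c v :=
  calc #S * (#S - 1)
      = 2 * (#S).choose 2 := by
        rw [Nat.choose_two_right, Nat.mul_div_cancel' (Nat.even_mul_pred_self _).two_dvd]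
    _ ≤ ∑ k ∈ S, k * 2 := by
        rw [← sum_mul, mul_comm]
        exact Nat.mul_le_mul_right 2 S.choose_two_card_le_sum
    _ ≤ ∑ k ∈ S, k * #{v | c v = k} := sum_le_sum fun k hk => Nat.mul_le_mul_left k (hS k hk)
    _ ≤ ∑ v, c v := sum_mul_card_fiber_le c S

namespace SimpleGraph

variable {V : Type*} [Fintype V]

theorem card_edgeFinset_compl [DecidableEq V] (G : SimpleGraph V) [DecidableRel G.Adj] :
    #Gᶜ.edgeFinset = (Fintype.card V).choose 2 - #G.edgeFinset := by
  rw [← card_edgeFinset_top_eq_card_choose_two, ← card_sdiff_of_subset (edgeFinset_mono le_top),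
    ← edgeFinset_sdiff]
  congr! 2

variable (H : SimpleGraph V) [DecidableRel H.Adj] (ord : V → ℕ)

def earlierNeighborFinset (v : V) : Finset V := {u | H.Adj u v ∧ ord u < ord v}

theorem le_card_earlierNeighborFinset {c : V → ℕ} {v : V}
    (hgreedy : ∀ ℓ < c v, ∃ u, ord u < ord v ∧ c u = ℓ ∧ H.Adj u v) :
    c v ≤ #(H.earlierNeighborFinset ord v) := by
  simpa using card_le_card_of_surjOn (s := H.earlierNeighborFinset ord v) (t := range (c v)) c
    fun ℓ hℓ => by
      obtain ⟨u, hord, rfl, hadj⟩ := hgreedy ℓ (by simpa using hℓ)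
      exact ⟨u, by simp [earlierNeighborFinset, hadj, hord], rfl⟩

theorem sum_card_earlierNeighborFinset_le [DecidableEq V] :
    ∑ v, #(H.earlierNeighborFinset ord v) ≤ #H.edgeFinset := by
  rw [← card_sigma]
  refine card_le_card_of_injOn (fun x => s(x.2, x.1)) (fun x hx => ?_) ?_
  · simp_all [earlierNeighborFinset]
  · rintro ⟨v₁, u₁⟩ h₁ ⟨v₂, u₂⟩ h₂ heq
    simp only [coe_sigma, Set.mem_sigma_iff, mem_coe, earlierNeighborFinset, mem_filter] at h₁ h₂
    rcases Sym2.eq_iff.1 heq with ⟨rfl, rfl⟩ | ⟨rfl, rfl⟩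
    · rfl
    · dsimp only at h₁ h₂
      omega

theorem sum_le_card_edgeFinset_of_firstFit [DecidableEq V] {c : V → ℕ}
    (hgreedy : ∀ v, ∀ ℓ < c v, ∃ u, ord u < ord v ∧ c u = ℓ ∧ H.Adj u v) :
    ∑ v, c v ≤ #H.edgeFinset :=
  (sum_le_sum fun v _ => H.le_card_earlierNeighborFinset ord (hgreedy v)).trans
    (H.sum_card_earlierNeighborFinset_le ord)

end SimpleGraph

theorem firstFit_big_classes_bound_general
    {V : Type*} [Fintype V] [DecidableEq V]
    (G : SimpleGraph V) [DecidableRel G.Adj]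
    (n m σ : ℕ)
    (hn : n = Fintype.card V)
    (hm : m = G.edgeFinset.card)
    (hσ : σ = n.choose 2 - m + 1)
    (ord : V → ℕ)
    (c : V → ℕ)
    (hgreedy : ∀ v : V, ∀ ℓ < c v, ∃ u : V, ord u < ord v ∧ c u = ℓ ∧ Gᶜ.Adj u v)
    (p : ℕ)
    (q : ℕ)
    (hq : q = ((Finset.range p).filter
        (fun k => 2 ≤ (Finset.univ.filter (fun v : V => c v = k)).card)).card) :
    q * (q - 1) ≤ σ - 1 := by
  subst hq hσ hn hm
  calc _ ≤ ∑ v, c v :=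
        card_mul_pred_le_sum_of_two_le_card_fiber c _ fun k hk => (mem_filter.1 hk).2
    _ ≤ #Gᶜ.edgeFinset := Gᶜ.sum_le_card_edgeFinset_of_firstFit ord hgreedy
    _ = _ := by rw [G.card_edgeFinset_compl, Nat.add_sub_cancel]

/-- Let `G` have `σ - 1` non-edges, where `σ = C(n,2) - m + 1`.  In any first-fit
greedy coloring of the complement of `G` (0-indexed coloring `c`, proper on `Gᶜ`,
with each smaller color blocked by an earlier complement-neighbor), the number `q`
of color classes of size at least `2` satisfies `q(q-1) ≤ σ - 1`. -/
theorem firstFit_big_classes_bound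
    {V : Type*} [Fintype V] [DecidableEq V]
    (G : SimpleGraph V) [DecidableRel G.Adj]
    (n m σ : ℕ)
    (hn : n = Fintype.card V)
    (hm : m = G.edgeFinset.card)
    (hσ : σ = n.choose 2 - m + 1)
    (ord : V → ℕ) (hord : Function.Injective ord)
    (c : V → ℕ)
    (hproper : ∀ u v : V, Gᶜ.Adj u v → c u ≠ c v)
    (hgreedy : ∀ v : V, ∀ ℓ < c v, ∃ u : V, ord u < ord v ∧ c u = ℓ ∧ Gᶜ.Adj u v)
    (p : ℕ) (hp : ∀ v : V, c v < p)
    (q : ℕ)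
    (hq : q = ((Finset.range p).filter
        (fun k => 2 ≤ (Finset.univ.filter (fun v : V => c v = k)).card)).card) :
    q * (q - 1) ≤ σ - 1 :=
  firstFit_big_classes_bound_general G n m σ hn hm hσ ord c hgreedy p q hq
end

section
/- Let G be a graph with degeneracy d and let H* be a subgraph of G maximizing the density ρ(H) = |E_H|/|V_H| over all (nonempty) subgraphs. Then any subgraph H' of G with minimum degree equal to d satisfies ρ(H') ≥ d/2 ≥ ρ(H*)/2; that is, a d-core of G is a 2-approximation to the densest subgraph. -/
/-!
Summing degrees over `H'` (handshake lemma) gives `d |V_{H'}| ≤ 2 |E_{H'}|`, i.e. `ρ(H') ≥ d / 2`.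
Conversely, if every nonempty subgraph has a vertex of degree at most `d`, peeling such vertices
off one at a time removes at most `d` edges per vertex, so `|E_H| ≤ d |V_H|` and `ρ(H) ≤ d` for
every subgraph `H`, in particular for the densest one.
-/

/-- The density `|E_H| / |V_H|` of a subgraph. -/
noncomputable def subgraphDensity {V : Type*} {G : SimpleGraph V}
    (H : G.Subgraph) : ℝ :=
  (H.edgeSet.ncard : ℝ) / (H.verts.ncard : ℝ)

namespace SimpleGraph.Subgraph

variable {V : Type*} {G : SimpleGraph V}

theorem sum_ncard_neighborSet [Fintype V] (H : G.Subgraph) :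
    ∑ v, (H.neighborSet v).ncard = 2 * H.edgeSet.ncard := by
  classical
  have handshake := H.spanningCoe.sum_degrees_eq_twice_card_edges
  simp only [← card_neighborSet_eq_degree, edgeFinset_card, ← Nat.card_eq_fintype_card,
    Nat.card_coe_set_eq, edgeSet_spanningCoe] at handshake
  exact handshake

theorem mul_ncard_verts_le_two_mul_ncard_edgeSet [Fintype V] {H : G.Subgraph} {d : ℕ}
    (hmin : ∀ v ∈ H.verts, d ≤ (H.neighborSet v).ncard) :
    d * H.verts.ncard ≤ 2 * H.edgeSet.ncard := by
  classical
  rw [← sum_ncard_neighborSet, Set.ncard_eq_toFinset_card', mul_comm, ← smul_eq_mul,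
    ← Finset.sum_const]
  calc ∑ _ ∈ H.verts.toFinset, d
      ≤ ∑ v ∈ H.verts.toFinset, (H.neighborSet v).ncard :=
        Finset.sum_le_sum fun v hv => hmin v (Set.mem_toFinset.1 hv)
    _ ≤ ∑ v, (H.neighborSet v).ncard := Finset.sum_le_sum_of_subset (Finset.subset_univ _)

theorem edgeSet_subset_deleteVerts_union (H : G.Subgraph) (v : V) :
    H.edgeSet ⊆ (H.deleteVerts {v}).edgeSet ∪ (fun w => s(v, w)) '' H.neighborSet v := by
  rintro ⟨a, b⟩ (hab : H.Adj a b)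
  by_cases hva : a = v
  · subst hva
    exact Or.inr ⟨b, hab, rfl⟩
  by_cases hvb : b = v
  · subst hvb
    exact Or.inr ⟨a, hab.symm, Sym2.eq_swap⟩
  · exact Or.inl ⟨⟨hab.fst_mem, hva⟩, ⟨hab.snd_mem, hvb⟩, hab⟩

theorem edgeSet_eq_empty_of_verts_eq_empty {H : G.Subgraph} (h : H.verts = ∅) :
    H.edgeSet = ∅ := by
  rw [(H.eq_bot_iff_verts_eq_empty).2 h]
  exact edgeSet_bot

theorem ncard_edgeSet_le_mul_ncard_verts [Finite V] {d : ℕ}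
    (hd : ∀ H : G.Subgraph, H.verts.Nonempty → ∃ v ∈ H.verts, (H.neighborSet v).ncard ≤ d)
    (H : G.Subgraph) : H.edgeSet.ncard ≤ d * H.verts.ncard := by
  induction hn : H.verts.ncard generalizing H with
  | zero =>
    rw [Set.ncard_eq_zero] at hn
    simp [edgeSet_eq_empty_of_verts_eq_empty hn]
  | succ n ih =>
    obtain ⟨v, hv, hdeg⟩ := hd H (by rw [← Set.ncard_pos]; omega)
    have hdel : (H.deleteVerts {v}).edgeSet.ncard ≤ d * n :=
      ih _ (by rw [deleteVerts_verts, Set.ncard_sdiff_singleton_of_mem hv, hn]; rfl)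
    calc H.edgeSet.ncard
        ≤ ((H.deleteVerts {v}).edgeSet ∪ (fun w => s(v, w)) '' H.neighborSet v).ncard :=
          Set.ncard_le_ncard (H.edgeSet_subset_deleteVerts_union v)
      _ ≤ (H.deleteVerts {v}).edgeSet.ncard + (H.neighborSet v).ncard :=
          (Set.ncard_union_le _ _).trans (Nat.add_le_add_left (Set.ncard_image_le) _)
      _ ≤ d * (n + 1) := by rw [Nat.mul_succ]; omega

end SimpleGraph.Subgraph

section Density

open SimpleGraph.Subgraph

variable {V : Type*} {G : SimpleGraph V}

theorem div_two_le_subgraphDensity [Fintype V] {H : G.Subgraph} {d : ℕ} (hH : H.verts.Nonempty)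
    (hmin : ∀ v ∈ H.verts, d ≤ (H.neighborSet v).ncard) :
    (d : ℝ) / 2 ≤ subgraphDensity H := by
  have hverts : (0 : ℝ) < H.verts.ncard := by exact_mod_cast (Set.ncard_pos).2 hH
  have hedges : (d : ℝ) * H.verts.ncard ≤ 2 * H.edgeSet.ncard := by
    exact_mod_cast mul_ncard_verts_le_two_mul_ncard_edgeSet hmin
  rw [subgraphDensity, div_le_div_iff₀ two_pos hverts]
  linarith

theorem subgraphDensity_le [Finite V] {d : ℕ}
    (hd : ∀ H : G.Subgraph, H.verts.Nonempty → ∃ v ∈ H.verts, (H.neighborSet v).ncard ≤ d)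
    (H : G.Subgraph) : subgraphDensity H ≤ d :=
  div_le_of_le_mul₀ (Nat.cast_nonneg _) (Nat.cast_nonneg _)
    (by exact_mod_cast ncard_edgeSet_le_mul_ncard_verts hd H)

end Density

theorem dCore_two_approx_densest_general
    {V : Type*} [Fintype V] (G : SimpleGraph V) (d : ℕ)
    (hd : ∀ H : G.Subgraph, H.verts.Nonempty →
      ∃ v ∈ H.verts, (H.neighborSet v).ncard ≤ d)
    (Hs : G.Subgraph)
    (H' : G.Subgraph) (hH' : H'.verts.Nonempty)
    (hmin : ∀ v ∈ H'.verts, d ≤ (H'.neighborSet v).ncard) :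
    (d : ℝ) / 2 ≤ subgraphDensity H' ∧
    subgraphDensity Hs / 2 ≤ (d : ℝ) / 2 :=
  ⟨div_two_le_subgraphDensity hH' hmin,
    div_le_div_of_nonneg_right (subgraphDensity_le hd Hs) zero_le_two⟩

/-- Let `G` have degeneracy `d` (every nonempty subgraph has a vertex of degree at
most `d`) and let `Hs` be a densest subgraph of `G`.  Then any subgraph `H'` of `G`
with minimum degree equal to `d` satisfies `ρ(H') ≥ d/2 ≥ ρ(Hs)/2`: a `d`-core is a
2-approximation to the densest subgraph. -/
theorem dCore_two_approx_densest
    {V : Type*} [Fintype V] (G : SimpleGraph V) (d : ℕ)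
    (hd : ∀ H : G.Subgraph, H.verts.Nonempty →
      ∃ v ∈ H.verts, (H.neighborSet v).ncard ≤ d)
    (Hs : G.Subgraph) (hHs : Hs.verts.Nonempty)
    (hmax : ∀ H : G.Subgraph, H.verts.Nonempty →
      subgraphDensity H ≤ subgraphDensity Hs)
    (H' : G.Subgraph) (hH' : H'.verts.Nonempty)
    (hmin : ∀ v ∈ H'.verts, d ≤ (H'.neighborSet v).ncard)
    (hminEq : ∃ v ∈ H'.verts, (H'.neighborSet v).ncard = d) :
    (d : ℝ) / 2 ≤ subgraphDensity H' ∧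
    subgraphDensity Hs / 2 ≤ (d : ℝ) / 2 :=
  dCore_two_approx_densest_general G d hd Hs H' hH' hmin
end
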